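/- For any integer s, the map ρ⋆_s : g → gl(V*) defined by ρ⋆_s(x)(ξ) = ρ*(φ^s(x))((β⁻²)*(ξ)) is a representation of the regular Hom-Lie algebra (g,[·,·],φ) on V* with respect to (β⁻¹)*, where (V,β,ρ) is a representation of g with β invertible. -/

import Mathlib

open LinearMap Module

/-- A (regular, i.e. multiplicative with invertible structure map) Hom-Lie algebra. -/
structure HomLieAlgebra (K g : Type*) [Field K] [AddCommGroup g] [Module K g] where
  bracket : g →ₗ[K] g →ₗ[K] g
  phi : g ≃ₗ[K] g
  skew : ∀ x y, bracket x y = - bracket y x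
  phi_bracket : ∀ x y, phi (bracket x y) = bracket (phi x) (phi y)
  jacobi : ∀ x y z,
    bracket (phi x) (bracket y z) + bracket (phi y) (bracket z x)
      + bracket (phi z) (bracket x y) = 0

variable {K g V : Type*} [Field K] [AddCommGroup g] [Module K g]
  [AddCommGroup V] [Module K V]

/-- `ρ` is a representation of the Hom-Lie algebra `L` on `V` with respect to `β`. -/
def HomLieAlgebra.IsRep (L : HomLieAlgebra K g) (β : V ≃ₗ[K] V)
    (ρ : g →ₗ[K] V →ₗ[K] V) : Prop :=
  (∀ x u, ρ (L.phi x) (β u) = β (ρ x u)) ∧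
  (∀ x y u, ρ (L.bracket x y) (β u) = ρ (L.phi x) (ρ y u) - ρ (L.phi y) (ρ x u))

/-- The `s`-twisted dual representation `ρ⋆_s(x)(ξ) = ρ*(φˢ(x))((β⁻²)*(ξ))`, i.e.
`⟨ρ⋆_s(x)ξ, u⟩ = −⟨ξ, β⁻²(ρ(φˢ(x))(u))⟩`. -/
def dualRepS (L : HomLieAlgebra K g) (β : V ≃ₗ[K] V) (ρ : g →ₗ[K] V →ₗ[K] V)
    (s : ℤ) (x : g) (ξ : Dual K V) : Dual K V :=
  - (ξ ∘ₗ β.symm.toLinearMap ∘ₗ β.symm.toLinearMap ∘ₗ ρ ((L.phi ^ s) x))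

lemma dualRepS_apply (L : HomLieAlgebra K g) (β : V ≃ₗ[K] V) (ρ : g →ₗ[K] V →ₗ[K] V)
    (s : ℤ) (x : g) (ξ : Dual K V) (u : V) :
    dualRepS L β ρ s x ξ u = -ξ (β.symm (β.symm (ρ ((L.phi ^ s) x) u))) := rfl

namespace HomLieAlgebra

variable (L : HomLieAlgebra K g)

lemma phi_symm_bracket (x y : g) :
    L.phi.symm (L.bracket x y) = L.bracket (L.phi.symm x) (L.phi.symm y) :=
  L.phi.injective <| by rw [L.phi_bracket]; simp

lemma zpow_phi_bracket (n : ℤ) (x y : g) :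
    (L.phi ^ n) (L.bracket x y) = L.bracket ((L.phi ^ n) x) ((L.phi ^ n) y) := by
  induction n using Int.induction_on generalizing x y with
  | zero => simp
  | succ k ih => simp only [zpow_add_one, LinearEquiv.mul_apply, L.phi_bracket, ih]
  | pred k ih =>
    simp only [zpow_sub_one, LinearEquiv.mul_apply, LinearEquiv.coe_inv, L.phi_symm_bracket, ih]

lemma zpow_phi_apply_phi (n : ℤ) (x : g) : (L.phi ^ n) (L.phi x) = L.phi ((L.phi ^ n) x) :=
  LinearEquiv.congr_fun ((Commute.refl L.phi).zpow_left n).eq x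

variable {L} {β : V ≃ₗ[K] V} {ρ : g →ₗ[K] V →ₗ[K] V}

lemma IsRep.apply_phi (hρ : L.IsRep β ρ) (x : g) (v : V) :
    ρ (L.phi x) v = β (ρ x (β.symm v)) := by
  simpa using hρ.1 x (β.symm v)

lemma IsRep.apply_bracket (hρ : L.IsRep β ρ) (x y : g) (v : V) :
    ρ (L.bracket x y) v = ρ (L.phi x) (ρ y (β.symm v)) - ρ (L.phi y) (ρ x (β.symm v)) := by
  simpa using hρ.2 x y (β.symm v)

lemma IsRep.dualRepS_phi (hρ : L.IsRep β ρ) (s : ℤ) (x : g) (ξ : Dual K V) :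
    dualRepS L β ρ s (L.phi x) (ξ ∘ₗ β.symm.toLinearMap)
      = dualRepS L β ρ s x ξ ∘ₗ β.symm.toLinearMap := by
  ext u
  simp [dualRepS_apply, zpow_phi_apply_phi, hρ.apply_phi]

lemma IsRep.dualRepS_bracket (hρ : L.IsRep β ρ) (s : ℤ) (x y : g) (ξ : Dual K V) :
    dualRepS L β ρ s (L.bracket x y) (ξ ∘ₗ β.symm.toLinearMap)
      = dualRepS L β ρ s (L.phi x) (dualRepS L β ρ s y ξ)
        - dualRepS L β ρ s (L.phi y) (dualRepS L β ρ s x ξ) := by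
  ext u
  simp [dualRepS_apply, zpow_phi_bracket, zpow_phi_apply_phi, hρ.apply_bracket, hρ.apply_phi]

end HomLieAlgebra

/-- for any integer `s`, `ρ⋆_s` is a representation of `g` on `V*` with
respect to `(β⁻¹)*`, where `(β⁻¹)* ξ = ξ ∘ β⁻¹`. -/
theorem dualRepS_isRep (L : HomLieAlgebra K g) (β : V ≃ₗ[K] V)
    (ρ : g →ₗ[K] V →ₗ[K] V) (hρ : L.IsRep β ρ) (s : ℤ) :
    (∀ (x : g) (ξ : Dual K V),
      dualRepS L β ρ s (L.phi x) (ξ ∘ₗ β.symm.toLinearMap)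
        = (dualRepS L β ρ s x ξ) ∘ₗ β.symm.toLinearMap) ∧
    (∀ (x y : g) (ξ : Dual K V),
      dualRepS L β ρ s (L.bracket x y) (ξ ∘ₗ β.symm.toLinearMap)
        = dualRepS L β ρ s (L.phi x) (dualRepS L β ρ s y ξ)
          - dualRepS L β ρ s (L.phi y) (dualRepS L β ρ s x ξ)) :=
  ⟨hρ.dualRepS_phi s, hρ.dualRepS_bracket s⟩
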